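/- Let λ > 0, α, β > 0, s₀ ∈ (0, 1/2], let u_{in0} be C² and u_{in1} be C¹ on a neighbourhood of [s₀,1], and define g(x) = ( α·u_{in0}′(x) + u_{in1}(x) ) / (2λ). Let s be a twice continuously differentiable solution of the free-boundary ODE ṡ(t) = (α+β)/2 − √( ((α+β)/2)² + g(s(t)+αt) − αβ ) with s(0) = s₀, and suppose ṡ(0) = −u_{in1}(s₀)/u_{in0}′(s₀) with u_{in0}′(s₀) ≠ 0 and 2·u_{in1}(s₀) + (α+β)·u_{in0}′(s₀) ≠ 0. Then s̈(0) = ( α·u_{in0}″(s₀) + u_{in1}′(s₀) )·( u_{in1}(s₀) − α·u_{in0}′(s₀) ) / ( 2λ·( 2·u_{in1}(s₀) + (α+β)·u_{in0}′(s₀) ) ). -/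

import Mathlib

/-!
Along the characteristic `x = s(t) + αt` the ODE reads `ṡ = F(g(s + αt))` with
`F = freeBoundaryRate α β` and `g = freeBoundaryData λ α u_{in0} u_{in1}`, so the chain rule gives
`s̈(0) = F'(g(s₀)) · g'(s₀) · (ṡ(0) + α)`. Since `F(y) = (α+β)/2 − √(…)`, its derivative is
`1 / (2 (F(y) − (α+β)/2))`, which the compatibility condition evaluates to
`−u_{in0}′(s₀) / (2u_{in1}(s₀) + (α+β)u_{in0}′(s₀))`; the hypothesis that this denominator is nonzero
is exactly what keeps the square root away from `0`, where it is not differentiable.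
-/

open Real

noncomputable def freeBoundaryRate (α β y : ℝ) : ℝ :=
  (α + β) / 2 - √(((α + β) / 2) ^ 2 + y - α * β)

noncomputable def freeBoundaryData (lam α : ℝ) (uin0 uin1 : ℝ → ℝ) (x : ℝ) : ℝ :=
  (α * deriv uin0 x + uin1 x) / (2 * lam)

theorem hasDerivAt_freeBoundaryRate {α β y : ℝ} (hy : freeBoundaryRate α β y ≠ (α + β) / 2) :
    HasDerivAt (freeBoundaryRate α β) (1 / (2 * (freeBoundaryRate α β y - (α + β) / 2))) y := by
  have hsqrt : freeBoundaryRate α β y - (α + β) / 2 = -√(((α + β) / 2) ^ 2 + y - α * β) := by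
    unfold freeBoundaryRate
    ring
  have hrad : ((α + β) / 2) ^ 2 + y - α * β ≠ 0 := by
    rw [Ne, ← sub_eq_zero, hsqrt, neg_eq_zero] at hy
    exact fun h => hy (by rw [h, sqrt_zero])
  have hderiv := (((hasDerivAt_id' y).const_add (((α + β) / 2) ^ 2)).sub_const (α * β)).sqrt hrad
  refine (hderiv.const_sub ((α + β) / 2)).congr_deriv ?_
  rw [hsqrt]
  ring

theorem hasDerivAt_freeBoundaryData {lam α x : ℝ} {uin0 uin1 : ℝ → ℝ} {U : Set ℝ}
    (hU : IsOpen U) (hx : x ∈ U) (h0 : ContDiffOn ℝ 2 uin0 U) (h1 : ContDiffOn ℝ 1 uin1 U) :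
    HasDerivAt (freeBoundaryData lam α uin0 uin1)
      ((α * deriv (deriv uin0) x + deriv uin1 x) / (2 * lam)) x := by
  have hd0 : DifferentiableAt ℝ (deriv uin0) x :=
    ((h0.deriv_of_isOpen hU (by norm_num)).contDiffAt (hU.mem_nhds hx)).differentiableAt
      one_ne_zero
  have hd1 : DifferentiableAt ℝ uin1 x :=
    (h1.contDiffAt (hU.mem_nhds hx)).differentiableAt one_ne_zero
  exact ((hd0.hasDerivAt.const_mul α).add hd1.hasDerivAt).div_const _

theorem HasDerivWithinAt.add_const_mul_id {s : ℝ → ℝ} {v α t : ℝ} {S : Set ℝ}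
    (hs : HasDerivWithinAt s v S t) :
    HasDerivWithinAt (fun τ => s τ + α * τ) (v + α) S t := by
  have hlin : HasDerivAt (fun τ : ℝ => α * τ) α t := by
    simpa using (hasDerivAt_id' t).const_mul α
  exact hs.add hlin.hasDerivWithinAt

section Compatibility

variable {α β a b : ℝ}

theorem neg_div_ne_half_add (ha : a ≠ 0) (hb : 2 * b + (α + β) * a ≠ 0) :
    -b / a ≠ (α + β) / 2 := by
  rw [Ne, div_eq_iff ha]
  contrapose! hb
  linarith

theorem one_div_two_mul_neg_div_sub_mul_add (ha : a ≠ 0) (hb : 2 * b + (α + β) * a ≠ 0) :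
    1 / (2 * (-b / a - (α + β) / 2)) * (-b / a + α) = (b - α * a) / (2 * b + (α + β) * a) := by
  have hden : 2 * (-b / a - (α + β) / 2) = -(2 * b + (α + β) * a) / a := by
    field_simp
    ring
  rw [hden]
  field_simp
  ring

end Compatibility

theorem initial_second_derivative_of_free_boundary
    (lam α β s₀ T : ℝ) (uin0 uin1 : ℝ → ℝ) (s : ℝ → ℝ) (U : Set ℝ)
    (hs₀ : s₀ ∈ Set.Ioc 0 (1 / 2 : ℝ)) (hT : 0 < T)
    (hU : IsOpen U) (hUi : Set.Icc s₀ 1 ⊆ U)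
    (h0 : ContDiffOn ℝ 2 uin0 U) (h1 : ContDiffOn ℝ 1 uin1 U)
    (hs2 : ContDiffOn ℝ 2 s (Set.Icc 0 T)) (hs0 : s 0 = s₀)
    (hODE : ∀ t ∈ Set.Icc (0 : ℝ) T, derivWithin s (Set.Icc 0 T) t
      = (α + β) / 2 - Real.sqrt (((α + β) / 2) ^ 2
          + (α * deriv uin0 (s t + α * t) + uin1 (s t + α * t)) / (2 * lam) - α * β))
    (ha : deriv uin0 s₀ ≠ 0)
    (hb : 2 * uin1 s₀ + (α + β) * deriv uin0 s₀ ≠ 0)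
    (hA : derivWithin s (Set.Icc 0 T) 0 = -uin1 s₀ / deriv uin0 s₀) :
    derivWithin (derivWithin s (Set.Icc 0 T)) (Set.Icc 0 T) 0
      = (α * deriv (deriv uin0) s₀ + deriv uin1 s₀) *
          (uin1 s₀ - α * deriv uin0 s₀) /
        (2 * lam * (2 * uin1 s₀ + (α + β) * deriv uin0 s₀)) := by
  have h0T : (0 : ℝ) ∈ Set.Icc 0 T := ⟨le_rfl, hT.le⟩
  have hsU : s₀ ∈ U := hUi ⟨le_rfl, hs₀.2.trans (by norm_num)⟩
  have hchar0 : s 0 + α * 0 = s₀ := by rw [hs0, mul_zero, add_zero]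
  have hODE' : Set.EqOn (derivWithin s (Set.Icc 0 T))
      ((freeBoundaryRate α β ∘ freeBoundaryData lam α uin0 uin1) ∘ fun t => s t + α * t)
      (Set.Icc 0 T) := hODE
  have hF0 : freeBoundaryRate α β (freeBoundaryData lam α uin0 uin1 s₀)
      = -uin1 s₀ / deriv uin0 s₀ := by
    simpa [hs0, hA] using (hODE' h0T).symm
  have hchar : HasDerivWithinAt (fun t => s t + α * t) (-uin1 s₀ / deriv uin0 s₀ + α)
      (Set.Icc 0 T) 0 := by
    have hs := (hs2.differentiableOn two_ne_zero 0 h0T).hasDerivWithinAt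
    rw [hA] at hs
    exact hs.add_const_mul_id
  have hrhs := (hasDerivAt_freeBoundaryRate (hF0 ▸ neg_div_ne_half_add ha hb)).comp s₀
    (hasDerivAt_freeBoundaryData (lam := lam) (α := α) hU hsU h0 h1)
  rw [← hchar0] at hrhs
  rw [derivWithin_congr hODE' (hODE' h0T),
    (hrhs.comp_hasDerivWithinAt 0 hchar).derivWithin (uniqueDiffOn_Icc hT 0 h0T), hchar0, hF0,
    mul_right_comm, one_div_two_mul_neg_div_sub_mul_add ha hb, div_mul_div_comm,
    mul_comm (uin1 s₀ - α * deriv uin0 s₀), mul_comm (2 * uin1 s₀ + (α + β) * deriv uin0 s₀)]
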